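/- arXiv:1902.06174 — 2 statements merged into one kernel-verified Lean document; each statement's English description precedes it below -/
import Mathlib

section
/- Let K ≤ M be positive integers, let H ∈ ℂ^{K×M} admit a right inverse H† ∈ ℂ^{M×K} with H H† = I_K, and let δ ≥ 0. Let E be a random K×M complex matrix on a probability space whose KM entries are mutually independent, square-integrable, zero-mean complex random variables satisfying 𝔼|[E]_{k,m}|² = δ |[H]_{k,m}|² for all k, m. Define Ĝ := H† − H† E H†. Then for every k ∈ {1,…,K}: 𝔼[ ‖[Ĝ]_{:,k}‖² ] = ‖[H†]_{:,k}‖² + δ Σ_{j=1}^{K} ‖[H†]_{:,j}‖² Σ_{m=1}^{M} |[H]_{j,m}[H†]_{m,k}|². -/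
open Matrix BigOperators MeasureTheory ProbabilityTheory

lemma integrable_normSq_of_memLp {Ω : Type*} [MeasurableSpace Ω] {μ : Measure Ω}
    {f : Ω → ℂ} (hf : MemLp f 2 μ) :
    Integrable (fun ω => Complex.normSq (f ω)) μ := by
  have h := hf.norm.integrable_sq
  refine h.congr ?_
  filter_upwards with ω
  rw [← Complex.sq_norm]

lemma aux_integral_mul_complex {Ω : Type*} [MeasurableSpace Ω] {μ : Measure Ω}
    {X Y : Ω → ℂ} (h : IndepFun X Y μ) (hX : Integrable X μ) (hY : Integrable Y μ) :
    ∫ ω, X ω * Y ω ∂μ = (∫ ω, X ω ∂μ) * (∫ ω, Y ω ∂μ) := by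
  have hXY : Integrable (fun ω => X ω * Y ω) μ := by
    simpa [Pi.mul_def] using h.integrable_mul hX hY
  have hrr : IndepFun (fun ω => (X ω).re) (fun ω => (Y ω).re) μ :=
    h.comp Complex.measurable_re Complex.measurable_re
  have hri : IndepFun (fun ω => (X ω).re) (fun ω => (Y ω).im) μ :=
    h.comp Complex.measurable_re Complex.measurable_im
  have hir : IndepFun (fun ω => (X ω).im) (fun ω => (Y ω).re) μ :=
    h.comp Complex.measurable_im Complex.measurable_re
  have hii : IndepFun (fun ω => (X ω).im) (fun ω => (Y ω).im) μ :=
    h.comp Complex.measurable_im Complex.measurable_im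
  have hXr : Integrable (fun ω => (X ω).re) μ := by simpa using hX.re
  have hXi : Integrable (fun ω => (X ω).im) μ := by simpa using hX.im
  have hYr : Integrable (fun ω => (Y ω).re) μ := by simpa using hY.re
  have hYi : Integrable (fun ω => (Y ω).im) μ := by simpa using hY.im
  have irr := hrr.integral_mul_eq_mul_integral hXr.1 hYr.1
  have iri := hri.integral_mul_eq_mul_integral hXr.1 hYi.1
  have iir := hir.integral_mul_eq_mul_integral hXi.1 hYr.1
  have iii := hii.integral_mul_eq_mul_integral hXi.1 hYi.1
  simp only [Pi.mul_def] at irr iri iir iii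
  have eXr : (∫ ω, X ω ∂μ).re = ∫ ω, (X ω).re ∂μ := by
    simpa using (integral_re hX).symm
  have eXi : (∫ ω, X ω ∂μ).im = ∫ ω, (X ω).im ∂μ := by
    simpa using (integral_im hX).symm
  have eYr : (∫ ω, Y ω ∂μ).re = ∫ ω, (Y ω).re ∂μ := by
    simpa using (integral_re hY).symm
  have eYi : (∫ ω, Y ω ∂μ).im = ∫ ω, (Y ω).im ∂μ := by
    simpa using (integral_im hY).symm
  apply Complex.ext
  · have : (∫ ω, X ω * Y ω ∂μ).re = ∫ ω, (X ω * Y ω).re ∂μ := by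
      simpa using (integral_re hXY).symm
    rw [this]
    simp only [Complex.mul_re]
    rw [integral_sub (by simpa [Pi.mul_def] using hrr.integrable_mul hXr hYr)
      (by simpa [Pi.mul_def] using hii.integrable_mul hXi hYi)]
    rw [show (∫ ω, (X ω).re * (Y ω).re ∂μ) = (∫ ω, (X ω).re ∂μ) * ∫ ω, (Y ω).re ∂μ from irr,
      show (∫ ω, (X ω).im * (Y ω).im ∂μ) = (∫ ω, (X ω).im ∂μ) * ∫ ω, (Y ω).im ∂μ from iii,
      eXr, eXi, eYr, eYi]
  · have : (∫ ω, X ω * Y ω ∂μ).im = ∫ ω, (X ω * Y ω).im ∂μ := by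
      simpa using (integral_im hXY).symm
    rw [this]
    simp only [Complex.mul_im]
    rw [integral_add (by simpa [Pi.mul_def] using hri.integrable_mul hXr hYi)
      (by simpa [Pi.mul_def] using hir.integrable_mul hXi hYr)]
    rw [show (∫ ω, (X ω).re * (Y ω).im ∂μ) = (∫ ω, (X ω).re ∂μ) * ∫ ω, (Y ω).im ∂μ from iri,
      show (∫ ω, (X ω).im * (Y ω).re ∂μ) = (∫ ω, (X ω).im ∂μ) * ∫ ω, (Y ω).re ∂μ from iir,
      eXr, eXi, eYr, eYi]

open Complex in
lemma second_moment_affine {Ω : Type*} [MeasurableSpace Ω] {μ : Measure Ω}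
    [IsProbabilityMeasure μ] {ι : Type*} [Fintype ι]
    (Z : ι → Ω → ℂ)
    (hindep : iIndepFun Z μ)
    (hL2 : ∀ i, MemLp (Z i) 2 μ)
    (hmean : ∀ i, ∫ ω, Z i ω ∂μ = 0)
    (a : ℂ) (c : ι → ℂ) :
    ∫ ω, Complex.normSq (a - ∑ i, c i * Z i ω) ∂μ
      = Complex.normSq a
        + ∑ i, Complex.normSq (c i) * ∫ ω, Complex.normSq (Z i ω) ∂μ := by
  classical
  set X : Ω → ℂ := fun ω => ∑ i, c i * Z i ω with hXdef
  have hZint : ∀ i, Integrable (Z i) μ := fun i => (hL2 i).integrable one_le_two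
  have conj_int : ∀ {f : Ω → ℂ}, Integrable f μ →
      Integrable (fun ω => (starRingEnd ℂ) (f ω)) μ := by
    intro f hf
    refine ⟨continuous_star.comp_aestronglyMeasurable hf.1, ?_⟩
    simpa [HasFiniteIntegral, nnnorm_star] using hf.2
  have hZconjint : ∀ i, Integrable (fun ω => (starRingEnd ℂ) (Z i ω)) μ :=
    fun i => conj_int (hZint i)
  have hXL2 : MemLp X 2 μ := by
    have h := memLp_finset_sum' Finset.univ
      (fun i (_ : i ∈ Finset.univ) => (hL2 i).const_mul (c i))
    convert h using 1
    funext ω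
    simp [hXdef]
  have hXint : Integrable X μ := hXL2.integrable one_le_two
  have hXmean : ∫ ω, X ω ∂μ = 0 := by
    rw [hXdef]
    rw [integral_finset_sum _ (fun i _ => ((hZint i).const_mul (c i)))]
    simp [integral_const_mul, hmean]
  have hprodint : ∀ i j, Integrable (fun ω => Z i ω * (starRingEnd ℂ) (Z j ω)) μ := by
    intro i j
    by_cases h : i = j
    · subst h
      have := (integrable_normSq_of_memLp (hL2 i)).ofReal (𝕜 := ℂ)
      refine this.congr ?_
      filter_upwards with ω
      rw [Complex.mul_conj]; rfl
    · have hij : IndepFun (Z i) (fun ω => (starRingEnd ℂ) (Z j ω)) μ :=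
        (hindep.indepFun h).comp measurable_id continuous_star.measurable
      simpa [Pi.mul_def] using hij.integrable_mul (hZint i) (hZconjint j)
  have hcross : ∀ i j, i ≠ j → ∫ ω, Z i ω * (starRingEnd ℂ) (Z j ω) ∂μ = 0 := by
    intro i j h
    have hij : IndepFun (Z i) (fun ω => (starRingEnd ℂ) (Z j ω)) μ :=
      (hindep.indepFun h).comp measurable_id continuous_star.measurable
    rw [aux_integral_mul_complex hij (hZint i) (hZconjint j), hmean i, zero_mul]
  have hdiag : ∀ i, ∫ ω, Z i ω * (starRingEnd ℂ) (Z i ω) ∂μ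
      = ((∫ ω, Complex.normSq (Z i ω) ∂μ : ℝ) : ℂ) := by
    intro i
    simp_rw [Complex.mul_conj]
    exact integral_ofReal
  have hXconjX : ∫ ω, X ω * (starRingEnd ℂ) (X ω) ∂μ
      = ∑ i, ((Complex.normSq (c i) : ℝ) : ℂ)
          * ((∫ ω, Complex.normSq (Z i ω) ∂μ : ℝ) : ℂ) := by
    have expand : ∀ ω, X ω * (starRingEnd ℂ) (X ω)
        = ∑ i, ∑ j, (c i * (starRingEnd ℂ) (c j)) * (Z i ω * (starRingEnd ℂ) (Z j ω)) := by
      intro ω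
      rw [hXdef]
      simp only [map_sum, _root_.map_mul, Finset.sum_mul_sum]
      exact Finset.sum_congr rfl fun i _ => Finset.sum_congr rfl fun j _ => by ring
    simp_rw [expand]
    rw [integral_finset_sum _ (fun i _ => integrable_finset_sum _
      (fun j _ => (hprodint i j).const_mul _))]
    refine Finset.sum_congr rfl fun i _ => ?_
    rw [integral_finset_sum _ (fun j _ => (hprodint i j).const_mul _)]
    rw [Finset.sum_eq_single i]
    · rw [integral_const_mul, hdiag i, ← Complex.mul_conj]
    · intro j _ hji
      rw [integral_const_mul, hcross i j (Ne.symm hji), mul_zero]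
    · intro h; exact absurd (Finset.mem_univ i) h
  have hXconjint : Integrable (fun ω => (starRingEnd ℂ) (X ω)) μ := conj_int hXint
  have hXconjXint : Integrable (fun ω => X ω * (starRingEnd ℂ) (X ω)) μ := by
    have := (integrable_normSq_of_memLp hXL2).ofReal (𝕜 := ℂ)
    refine this.congr ?_
    filter_upwards with ω
    rw [Complex.mul_conj]; rfl
  have e : ∀ ω, ((Complex.normSq (a - X ω) : ℝ) : ℂ)
      = a * (starRingEnd ℂ) a - a * (starRingEnd ℂ) (X ω)
        - X ω * (starRingEnd ℂ) a + X ω * (starRingEnd ℂ) (X ω) := by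
    intro ω
    rw [← Complex.mul_conj, map_sub]
    ring
  have hmain : ∫ ω, ((Complex.normSq (a - X ω) : ℝ) : ℂ) ∂μ
      = ((Complex.normSq a : ℝ) : ℂ)
        + ∑ i, ((Complex.normSq (c i) : ℝ) : ℂ)
            * ((∫ ω, Complex.normSq (Z i ω) ∂μ : ℝ) : ℂ) := by
    have I2 : Integrable (fun ω => a * (starRingEnd ℂ) (X ω)) μ := hXconjint.const_mul a
    have I3 : Integrable (fun ω => X ω * (starRingEnd ℂ) a) μ := hXint.mul_const _
    have I1 : Integrable (fun ω => a * (starRingEnd ℂ) a - a * (starRingEnd ℂ) (X ω)) μ :=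
      (integrable_const _).sub I2
    have I0 : Integrable (fun ω => a * (starRingEnd ℂ) a - a * (starRingEnd ℂ) (X ω)
        - X ω * (starRingEnd ℂ) a) μ := I1.sub I3
    simp_rw [e]
    rw [integral_add I0 hXconjXint, integral_sub I1 I3, integral_sub (integrable_const _) I2,
      integral_const, integral_const_mul, integral_mul_const, integral_conj, hXmean,
      hXconjX]
    simp [Complex.mul_conj]
  have lhs : ∫ ω, ((Complex.normSq (a - X ω) : ℝ) : ℂ) ∂μ
      = ((∫ ω, Complex.normSq (a - X ω) ∂μ : ℝ) : ℂ) := integral_ofReal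
  rw [lhs] at hmain
  exact_mod_cast hmain

/-- For a right inverse `H†` of `H` and a random error matrix `E` with
mutually independent, square-integrable, zero-mean entries of variance
`𝔼|[E]_{k,m}|² = δ|[H]_{k,m}|²`, the first-order perturbed right inverse
`Ĝ = H† − H† E H†` satisfies
`𝔼‖[Ĝ]_{:,k}‖² = ‖[H†]_{:,k}‖² + δ ∑_j ‖[H†]_{:,j}‖² ∑_m |[H]_{j,m}[H†]_{m,k}|²`. -/
theorem expected_precoder_column_norm {K M : ℕ} (hKM : K ≤ M) (hK : 0 < K) (hM : 0 < M)
    (H : Matrix (Fin K) (Fin M) ℂ) (Hd : Matrix (Fin M) (Fin K) ℂ)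
    (hHd : H * Hd = 1) (δ : ℝ) (hδ : 0 ≤ δ)
    {Ω : Type*} [MeasurableSpace Ω] (μ : Measure Ω) [IsProbabilityMeasure μ]
    (E : Ω → Matrix (Fin K) (Fin M) ℂ)
    (hindep : iIndepFun
      (fun (p : Fin K × Fin M) ω => E ω p.1 p.2) μ)
    (hL2 : ∀ (k : Fin K) (m : Fin M), MemLp (fun ω => E ω k m) 2 μ)
    (hmean : ∀ (k : Fin K) (m : Fin M), (∫ ω, E ω k m ∂μ) = 0)
    (hvar : ∀ (k : Fin K) (m : Fin M),
      (∫ ω, Complex.normSq (E ω k m) ∂μ) = δ * Complex.normSq (H k m))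
    (G : Ω → Matrix (Fin M) (Fin K) ℂ)
    (hG : ∀ ω, G ω = Hd - Hd * E ω * Hd) :
    ∀ k : Fin K,
      (∫ ω, (∑ m, Complex.normSq (G ω m k)) ∂μ) =
        (∑ m, Complex.normSq (Hd m k)) +
          δ * ∑ j, (∑ m, Complex.normSq (Hd m j)) *
            ∑ m, Complex.normSq (H j m * Hd m k) := by
  intro k
  classical
  have hpoint : ∀ ω (m : Fin M), G ω m k
      = Hd m k - ∑ p : Fin K × Fin M, (Hd m p.1 * Hd p.2 k) * E ω p.1 p.2 := by
    intro ω m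
    rw [hG]
    simp only [Matrix.sub_apply]
    congr 1
    rw [Matrix.mul_apply]
    simp_rw [Matrix.mul_apply, Finset.sum_mul]
    rw [Fintype.sum_prod_type, Finset.sum_comm]
    exact Finset.sum_congr rfl fun j _ => Finset.sum_congr rfl fun m' _ => by ring
  have hm : ∀ m : Fin M, ∫ ω, Complex.normSq (G ω m k) ∂μ
      = Complex.normSq (Hd m k) + ∑ p : Fin K × Fin M,
          Complex.normSq (Hd m p.1 * Hd p.2 k) * ∫ ω, Complex.normSq (E ω p.1 p.2) ∂μ := by
    intro m
    have h := second_moment_affine (fun (p : Fin K × Fin M) ω => E ω p.1 p.2) hindep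
      (fun (p : Fin K × Fin M) => hL2 p.1 p.2)
      (fun (p : Fin K × Fin M) => hmean p.1 p.2) (Hd m k)
      (fun (p : Fin K × Fin M) => Hd m p.1 * Hd p.2 k)
    simp only [hpoint]
    exact h
  have hGL2 : ∀ m : Fin M, MemLp (fun ω => G ω m k) 2 μ := by
    intro m
    have h : MemLp (fun ω => Hd m k
        - ∑ p : Fin K × Fin M, (Hd m p.1 * Hd p.2 k) * E ω p.1 p.2) 2 μ := by
      refine (memLp_const _).sub ?_
      have h2 := memLp_finset_sum' Finset.univ
        (fun (p : Fin K × Fin M) (_ : p ∈ Finset.univ) => (hL2 p.1 p.2).const_mul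
          (Hd m p.1 * Hd p.2 k))
      convert h2 using 1
      funext ω
      simp
    exact MemLp.ae_eq (ae_of_all _ fun ω => (hpoint ω m).symm) h
  have hint : ∀ m : Fin M, Integrable (fun ω => Complex.normSq (G ω m k)) μ :=
    fun m => integrable_normSq_of_memLp (hGL2 m)
  rw [integral_finset_sum _ (fun m _ => hint m)]
  rw [Finset.sum_congr rfl (fun m _ => hm m)]
  rw [Finset.sum_add_distrib]
  congr 1
  simp_rw [hvar, Complex.normSq_mul]
  rw [show (∑ m : Fin M, ∑ p : Fin K × Fin M,
      Complex.normSq (Hd m p.1) * Complex.normSq (Hd p.2 k)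
        * (δ * Complex.normSq (H p.1 p.2)))
    = ∑ p : Fin K × Fin M, ∑ m : Fin M,
      Complex.normSq (Hd m p.1) * Complex.normSq (Hd p.2 k)
        * (δ * Complex.normSq (H p.1 p.2)) from Finset.sum_comm]
  rw [Fintype.sum_prod_type]
  simp only [Finset.mul_sum, Finset.sum_mul]
  refine Finset.sum_congr rfl fun j _ => ?_
  refine Finset.sum_congr rfl fun m _ => Finset.sum_congr rfl fun m' _ => by ring
end

section
/- Let K ≤ M be positive integers, let H ∈ ℂ^{K×M} admit a right inverse H† ∈ ℂ^{M×K} with H H† = I_K, let δ ≥ 0 and P > 0. Let E be a random K×M complex matrix on a probability space whose KM entries are mutually independent, square-integrable, zero-mean complex random variables satisfying 𝔼|[E]_{k,m}|² = δ |[H]_{k,m}|² for all k, m, and define Ĝ := H† − H† E H†. Suppose 𝔼[‖[Ĝ]_{:,k}‖²] > 0. Then for every k ∈ {1,…,K}: P · 𝔼[ |[H Ĝ]_{k,k}|² ] / ( K · 𝔼[ ‖[Ĝ]_{:,k}‖² ] ) = P (1 + δ Σ_{m=1}^{M} |[H]_{k,m}[H†]_{m,k}|²) / ( K ( ‖[H†]_{:,k}‖²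 + δ Σ_{j=1}^{K} ‖[H†]_{:,j}‖² Σ_{m=1}^{M} |[H]_{j,m}[H†]_{m,k}|² ) ), i.e., this ratio equals the expected signal power S_k of Theorem 1. -/
open Matrix BigOperators MeasureTheory ProbabilityTheory

section AuxSignalPower

open MeasureTheory ProbabilityTheory ComplexConjugate

set_option linter.unusedSectionVars false


variable {Ω : Type*} [MeasurableSpace Ω] {μ : Measure Ω} [IsProbabilityMeasure μ]

lemma memℒp_conj' {f : Ω → ℂ} (hf : MemLp f 2 μ) : MemLp (fun ω => conj (f ω)) 2 μ :=
  MemLp.of_le hf (Complex.continuous_conj.comp_aestronglyMeasurable hf.1)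
    (ae_of_all _ fun ω => by simp)

lemma integrable_mul_conj' {f g : Ω → ℂ} (hf : MemLp f 2 μ) (hg : MemLp g 2 μ) :
    Integrable (fun ω => f ω * conj (g ω)) μ := by
  have h := (MemLp.smul (p := 2) (q := 2) (r := 1) (memℒp_conj' hg) hf)
  rw [memLp_one_iff_integrable] at h
  simpa [Pi.smul_apply, smul_eq_mul, Pi.mul_def] using h

lemma integrable_normSq' {f : Ω → ℂ} (hf : MemLp f 2 μ) :
    Integrable (fun ω => Complex.normSq (f ω)) μ := by
  have h := (memLp_two_iff_integrable_sq_norm hf.1).mp hf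
  simpa [Complex.normSq_eq_norm_sq] using h

lemma integral_mul_conj_zero' {X Y : Ω → ℂ} (h : IndepFun X Y μ)
    (hX : MemLp X 2 μ) (hY : MemLp Y 2 μ)
    (hXm : (∫ ω, X ω ∂μ) = 0) (hYm : (∫ ω, Y ω ∂μ) = 0) :
    (∫ ω, X ω * conj (Y ω) ∂μ) = 0 := by
  have hXi : Integrable X μ := hX.integrable one_le_two
  have hYi : Integrable Y μ := hY.integrable one_le_two
  set a : Ω → ℝ := fun ω => (X ω).re with ha
  set b : Ω → ℝ := fun ω => (X ω).im with hb
  set c : Ω → ℝ := fun ω => (Y ω).re with hc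
  set d : Ω → ℝ := fun ω => (Y ω).im with hd
  have hai : Integrable a μ := hXi.re
  have hbi : Integrable b μ := hXi.im
  have hci : Integrable c μ := hYi.re
  have hdi : Integrable d μ := hYi.im
  have ha0 : (∫ ω, a ω ∂μ) = 0 := by
    have := integral_re (𝕜 := ℂ) hXi; simp only [RCLike.re_to_complex] at this
    rw [ha]; simp [this, hXm]
  have hb0 : (∫ ω, b ω ∂μ) = 0 := by
    have := integral_im (𝕜 := ℂ) hXi; simp only [RCLike.im_to_complex] at this
    rw [hb]; simp [this, hXm]
  have hc0 : (∫ ω, c ω ∂μ) = 0 := by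
    have := integral_re (𝕜 := ℂ) hYi; simp only [RCLike.re_to_complex] at this
    rw [hc]; simp [this, hYm]
  have hd0 : (∫ ω, d ω ∂μ) = 0 := by
    have := integral_im (𝕜 := ℂ) hYi; simp only [RCLike.im_to_complex] at this
    rw [hd]; simp [this, hYm]
  have hac : IndepFun a c μ := h.comp Complex.measurable_re Complex.measurable_re
  have hbd : IndepFun b d μ := h.comp Complex.measurable_im Complex.measurable_im
  have hbc : IndepFun b c μ := h.comp Complex.measurable_im Complex.measurable_re
  have had : IndepFun a d μ := h.comp Complex.measurable_re Complex.measurable_im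
  have hiac : Integrable (a * c) μ := hac.integrable_mul hai hci
  have hibd : Integrable (b * d) μ := hbd.integrable_mul hbi hdi
  have hibc : Integrable (b * c) μ := hbc.integrable_mul hbi hci
  have hiad : Integrable (a * d) μ := had.integrable_mul hai hdi
  have hZ : Integrable (fun ω => X ω * conj (Y ω)) μ := integrable_mul_conj' hX hY
  have hre0 : (∫ ω, (X ω * conj (Y ω)).re ∂μ) = 0 := by
    have heq : ∀ ω, (X ω * conj (Y ω)).re = (a * c) ω + (b * d) ω := by
      intro ω; simp [Complex.mul_re, ha, hb, hc, hd]; try ring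
    rw [integral_congr_ae (ae_of_all _ heq), integral_add hiac hibd,
      hac.integral_mul_eq_mul_integral hai.1 hci.1, hbd.integral_mul_eq_mul_integral hbi.1 hdi.1, ha0, hb0]
    ring
  have him0 : (∫ ω, (X ω * conj (Y ω)).im ∂μ) = 0 := by
    have heq : ∀ ω, (X ω * conj (Y ω)).im = (b * c) ω - (a * d) ω := by
      intro ω; simp [Complex.mul_im, ha, hb, hc, hd]; try ring
    rw [integral_congr_ae (ae_of_all _ heq), integral_sub hibc hiad,
      hbc.integral_mul_eq_mul_integral hbi.1 hci.1, had.integral_mul_eq_mul_integral hai.1 hdi.1, hb0, ha0]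
    ring
  have := integral_re_add_im (𝕜 := ℂ) hZ
  simp only [RCLike.re_to_complex, RCLike.im_to_complex] at this
  rw [← this, hre0, him0]
  simp

lemma core_expansion {ι : Type*} [Fintype ι] (X : ι → Ω → ℂ)
    (hindep : iIndepFun X μ)
    (hL2 : ∀ i, MemLp (X i) 2 μ) (hmean : ∀ i, (∫ ω, X i ω ∂μ) = 0)
    (d : ℂ) (c : ι → ℂ) :
    (∫ ω, Complex.normSq (d + ∑ i, c i * X i ω) ∂μ)
      = Complex.normSq d
        + ∑ i, Complex.normSq (c i) * ∫ ω, Complex.normSq (X i ω) ∂μ := by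
  have hXi : ∀ i, Integrable (X i) μ := fun i => (hL2 i).integrable one_le_two
  have hconji : ∀ i, Integrable (fun ω => conj (X i ω)) μ :=
    fun i => (memℒp_conj' (hL2 i)).integrable one_le_two
  have hmuli : ∀ i j, Integrable (fun ω => X i ω * conj (X j ω)) μ :=
    fun i j => integrable_mul_conj' (hL2 i) (hL2 j)
  have expand : ∀ ω, ((d + ∑ i, c i * X i ω) * conj (d + ∑ i, c i * X i ω) : ℂ)
      = d * conj d + ((∑ i, (conj d * c i) * X i ω)
          + ((∑ j, (d * conj (c j)) * conj (X j ω))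
          + ∑ i, ∑ j, (c i * conj (c j)) * (X i ω * conj (X j ω)))) := by
    intro ω
    have hconjS : (conj (d + ∑ i, c i * X i ω) : ℂ)
        = conj d + ∑ j, conj (c j) * conj (X j ω) := by
      rw [_root_.map_add, _root_.map_sum]
      exact congrArg _ (Finset.sum_congr rfl fun j _ => by rw [_root_.map_mul])
    rw [hconjS]
    have e1 : (∑ i, c i * X i ω) * (∑ j, conj (c j) * conj (X j ω))
        = ∑ i, ∑ j, (c i * conj (c j)) * (X i ω * conj (X j ω)) := by
      rw [Finset.sum_mul_sum]
      exact Finset.sum_congr rfl fun i _ => Finset.sum_congr rfl fun j _ => by ring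
    have e2 : conj d * (∑ i, c i * X i ω) = ∑ i, (conj d * c i) * X i ω := by
      rw [Finset.mul_sum]
      exact Finset.sum_congr rfl fun i _ => by ring
    have e3 : d * (∑ j, conj (c j) * conj (X j ω)) = ∑ j, (d * conj (c j)) * conj (X j ω) := by
      rw [Finset.mul_sum]
      exact Finset.sum_congr rfl fun j _ => by ring
    calc (d + ∑ i, c i * X i ω) * (conj d + ∑ j, conj (c j) * conj (X j ω))
        = d * conj d + (conj d * (∑ i, c i * X i ω)
          + (d * (∑ j, conj (c j) * conj (X j ω))
          + (∑ i, c i * X i ω) * (∑ j, conj (c j) * conj (X j ω)))) := by ring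
      _ = _ := by rw [e1, e2, e3]
  -- complex-valued computation
  have I1 : Integrable (fun ω => ∑ i, (conj d * c i) * X i ω) μ :=
    integrable_finset_sum _ fun i _ => (hXi i).const_mul _
  have I2 : Integrable (fun ω => ∑ j, (d * conj (c j)) * conj (X j ω)) μ :=
    integrable_finset_sum _ fun j _ => (hconji j).const_mul _
  have I3 : Integrable (fun ω => ∑ i, ∑ j, (c i * conj (c j)) * (X i ω * conj (X j ω))) μ :=
    integrable_finset_sum _ fun i _ => integrable_finset_sum _ fun j _ => (hmuli i j).const_mul _
  have hC : (∫ ω, ((d + ∑ i, c i * X i ω) * conj (d + ∑ i, c i * X i ω) : ℂ) ∂μ)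
      = d * conj d + ∑ i, (c i * conj (c i)) * ∫ ω, (X i ω * conj (X i ω)) ∂μ := by
    rw [integral_congr_ae (ae_of_all _ expand)]
    have I23 : Integrable (fun ω => (∑ j, (d * conj (c j)) * conj (X j ω))
        + ∑ i, ∑ j, (c i * conj (c j)) * (X i ω * conj (X j ω))) μ := I2.add I3
    have I123 : Integrable (fun ω => (∑ i, (conj d * c i) * X i ω)
        + ((∑ j, (d * conj (c j)) * conj (X j ω))
          + ∑ i, ∑ j, (c i * conj (c j)) * (X i ω * conj (X j ω)))) μ := I1.add I23
    rw [integral_add (integrable_const _) I123, integral_add I1 I23, integral_add I2 I3]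
    rw [integral_finset_sum _ fun i _ => (hXi i).const_mul _,
      integral_finset_sum _ fun j _ => (hconji j).const_mul _,
      integral_finset_sum _ fun i _ => integrable_finset_sum _ fun j _ => (hmuli i j).const_mul _]
    simp only [integral_const_mul, hmean, integral_conj, mul_zero, Finset.sum_const_zero,
      map_zero, add_zero, zero_add, integral_const, measure_univ, ENNReal.toReal_one, probReal_univ, one_smul]
    congr 1
    refine Finset.sum_congr rfl fun i _ => ?_
    rw [integral_finset_sum _ fun j _ => (hmuli i j).const_mul _]
    rw [Finset.sum_eq_single i (fun j _ hji => by
        rw [integral_const_mul,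
          integral_mul_conj_zero' (hindep.indepFun hji.symm) (hL2 i) (hL2 j) (hmean i) (hmean j),
          mul_zero])
      (fun h => absurd (Finset.mem_univ i) h), integral_const_mul]
  have hdiag : ∀ i, (∫ ω, (X i ω * conj (X i ω)) ∂μ)
      = ((∫ ω, Complex.normSq (X i ω) ∂μ : ℝ) : ℂ) := by
    intro i
    simp_rw [Complex.mul_conj]
    exact integral_ofReal
  have hL : ((∫ ω, Complex.normSq (d + ∑ i, c i * X i ω) ∂μ : ℝ) : ℂ)
      = ∫ ω, ((d + ∑ i, c i * X i ω) * conj (d + ∑ i, c i * X i ω) : ℂ) ∂μ := by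
    simp_rw [Complex.mul_conj]
    exact integral_ofReal.symm
  have := hL.trans hC
  simp only [hdiag] at this
  simp only [Complex.mul_conj] at this
  exact_mod_cast this

end AuxSignalPower

/-- Under the random error model for `E` and the first-order perturbed
right inverse `Ĝ = H† − H† E H†`, provided `𝔼‖[Ĝ]_{:,k}‖² > 0`, the ratio
`P 𝔼|[H Ĝ]_{k,k}|² / (K 𝔼‖[Ĝ]_{:,k}‖²)` equals the expected signal power
`S_k = P(1 + δ∑_m |[H]_{k,m}[H†]_{m,k}|²) /
 (K(‖[H†]_{:,k}‖² + δ∑_j ‖[H†]_{:,j}‖² ∑_m |[H]_{j,m}[H†]_{m,k}|²))` of Theorem 1. -/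
theorem expected_signal_power {K M : ℕ} (hKM : K ≤ M) (hK : 0 < K) (hM : 0 < M)
    (H : Matrix (Fin K) (Fin M) ℂ) (Hd : Matrix (Fin M) (Fin K) ℂ)
    (hHd : H * Hd = 1) (δ : ℝ) (hδ : 0 ≤ δ) (P : ℝ) (hP : 0 < P)
    {Ω : Type*} [MeasurableSpace Ω] (μ : Measure Ω) [IsProbabilityMeasure μ]
    (E : Ω → Matrix (Fin K) (Fin M) ℂ)
    (hindep : iIndepFun
      (fun (p : Fin K × Fin M) ω => E ω p.1 p.2) μ)
    (hL2 : ∀ (k : Fin K) (m : Fin M), MemLp (fun ω => E ω k m) 2 μ)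
    (hmean : ∀ (k : Fin K) (m : Fin M), (∫ ω, E ω k m ∂μ) = 0)
    (hvar : ∀ (k : Fin K) (m : Fin M),
      (∫ ω, Complex.normSq (E ω k m) ∂μ) = δ * Complex.normSq (H k m))
    (G : Ω → Matrix (Fin M) (Fin K) ℂ)
    (hG : ∀ ω, G ω = Hd - Hd * E ω * Hd) :
    ∀ k : Fin K, 0 < (∫ ω, (∑ m, Complex.normSq (G ω m k)) ∂μ) →
      P * (∫ ω, Complex.normSq ((H * G ω) k k) ∂μ) /
          (K * ∫ ω, (∑ m, Complex.normSq (G ω m k)) ∂μ) =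
        P * (1 + δ * ∑ m, Complex.normSq (H k m * Hd m k)) /
          (K * ((∑ m, Complex.normSq (Hd m k)) +
            δ * ∑ j, (∑ m, Complex.normSq (Hd m j)) *
              ∑ m, Complex.normSq (H j m * Hd m k))) := by
  intro k _hpos
  classical
  have hL2' : ∀ p : Fin K × Fin M, MemLp ((fun p ω => E ω p.1 p.2) p) 2 μ :=
    fun p => hL2 p.1 p.2
  have hmean' : ∀ p : Fin K × Fin M, (∫ ω, (fun p ω => E ω p.1 p.2) p ω ∂μ) = 0 :=
    fun p => hmean p.1 p.2
  -- numerator representation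
  have hnum_repr : ∀ ω, (H * G ω) k k
      = 1 + ∑ p : Fin K × Fin M, (if p.1 = k then -Hd p.2 k else 0) * E ω p.1 p.2 := by
    intro ω
    have h1 : H * G ω = 1 - E ω * Hd := by
      rw [hG ω, Matrix.mul_sub, hHd, ← Matrix.mul_assoc, ← Matrix.mul_assoc, hHd, Matrix.one_mul]
    have h2 : ∑ p : Fin K × Fin M, (if p.1 = k then -Hd p.2 k else 0) * E ω p.1 p.2
        = -∑ m, E ω k m * Hd m k := by
      rw [Fintype.sum_prod_type]
      rw [Finset.sum_eq_single k (fun j _ hj => by simp [hj])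
        (fun h => absurd (Finset.mem_univ k) h)]
      rw [← Finset.sum_neg_distrib]
      exact Finset.sum_congr rfl fun m _ => by simp [mul_comm]
    rw [h1, Matrix.sub_apply, Matrix.one_apply_eq, Matrix.mul_apply, h2, sub_eq_add_neg]
  -- numerator value
  have hnum : (∫ ω, Complex.normSq ((H * G ω) k k) ∂μ)
      = 1 + δ * ∑ m, Complex.normSq (H k m * Hd m k) := by
    rw [integral_congr_ae (ae_of_all _ fun ω => congrArg Complex.normSq (hnum_repr ω))]
    have hcore := core_expansion (ι := Fin K × Fin M) (fun p ω => E ω p.1 p.2) hindep hL2' hmean' 1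
      (fun p => if p.1 = k then -Hd p.2 k else 0)
    beta_reduce at hcore
    rw [hcore]
    simp only [Complex.normSq_one]
    congr 1
    rw [Fintype.sum_prod_type]
    rw [Finset.sum_eq_single k (fun j _ hj => by simp [hj])
      (fun h => absurd (Finset.mem_univ k) h)]
    rw [Finset.mul_sum]
    refine Finset.sum_congr rfl fun m _ => ?_
    rw [hvar k m]
    simp [Complex.normSq_mul]
    ring
  -- denominator representation
  have hden_repr : ∀ (m : Fin M) (ω : Ω), G ω m k
      = Hd m k + ∑ p : Fin K × Fin M, (-(Hd m p.1 * Hd p.2 k)) * E ω p.1 p.2 := by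
    intro m ω
    have h3 : (Hd * E ω * Hd) m k
        = ∑ p : Fin K × Fin M, (Hd m p.1 * Hd p.2 k) * E ω p.1 p.2 := by
      rw [Matrix.mul_apply]
      rw [Fintype.sum_prod_type]
      rw [Finset.sum_comm]
      refine Finset.sum_congr rfl fun m' _ => ?_
      rw [Matrix.mul_apply, Finset.sum_mul]
      exact Finset.sum_congr rfl fun j _ => by ring
    rw [hG ω, Matrix.sub_apply, h3, sub_eq_add_neg, ← Finset.sum_neg_distrib]
    congr 1
    exact Finset.sum_congr rfl fun p _ => by ring
  -- per-entry second moment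
  have each : ∀ m : Fin M, (∫ ω, Complex.normSq (G ω m k) ∂μ)
      = Complex.normSq (Hd m k) + ∑ p : Fin K × Fin M,
          Complex.normSq (Hd m p.1 * Hd p.2 k) * (δ * Complex.normSq (H p.1 p.2)) := by
    intro m
    rw [integral_congr_ae (ae_of_all _ fun ω => congrArg Complex.normSq (hden_repr m ω))]
    have hcore := core_expansion (ι := Fin K × Fin M) (fun p ω => E ω p.1 p.2) hindep hL2' hmean' (Hd m k)
      (fun p => -(Hd m p.1 * Hd p.2 k))
    beta_reduce at hcore
    rw [hcore]
    congr 1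
    refine Finset.sum_congr rfl fun p _ => ?_
    rw [hvar p.1 p.2, Complex.normSq_neg]
  have integr : ∀ m : Fin M, Integrable (fun ω => Complex.normSq (G ω m k)) μ := by
    intro m
    have hmem : MemLp (fun ω => Hd m k + ∑ p : Fin K × Fin M,
        (-(Hd m p.1 * Hd p.2 k)) * E ω p.1 p.2) 2 μ :=
      (memLp_const (Hd m k)).add (memLp_finsetSum (μ := μ) (p := 2) Finset.univ
        fun p _ => (hL2 p.1 p.2).const_mul (-(Hd m p.1 * Hd p.2 k)))
    have : (fun ω => Complex.normSq (G ω m k))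
        = fun ω => Complex.normSq (Hd m k + ∑ p : Fin K × Fin M,
            (-(Hd m p.1 * Hd p.2 k)) * E ω p.1 p.2) :=
      funext fun ω => congrArg Complex.normSq (hden_repr m ω)
    rw [this]
    exact integrable_normSq' hmem
  -- denominator value
  have hden : (∫ ω, (∑ m, Complex.normSq (G ω m k)) ∂μ)
      = (∑ m, Complex.normSq (Hd m k)) +
          δ * ∑ j, (∑ m, Complex.normSq (Hd m j)) *
            ∑ m, Complex.normSq (H j m * Hd m k) := by
    rw [integral_finset_sum _ fun m _ => integr m]
    rw [Finset.sum_congr rfl fun m _ => each m]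
    rw [Finset.sum_add_distrib]
    congr 1
    rw [Finset.mul_sum, Finset.sum_comm]
    rw [Fintype.sum_prod_type]
    refine Finset.sum_congr rfl fun j _ => ?_
    rw [Finset.sum_comm]
    rw [Finset.sum_mul_sum, Finset.mul_sum]
    refine Finset.sum_congr rfl fun m _ => ?_
    rw [Finset.mul_sum]
    refine Finset.sum_congr rfl fun m' _ => ?_
    simp [Complex.normSq_mul]
    ring
  rw [hnum, hden]
end
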